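/- Let C be the matrix with rows (−1,2,2), (−2,1,2), (−2,2,3). If (x,y,z) is a primitive Pythagorean triple, then C·(x,y,z)ᵀ is a primitive Pythagorean triple. -/

import Mathlib

/-!
The matrix `C` has determinant `1` and preserves the Lorentz form `x² + y² - z²`, so it maps
solutions to solutions, and every common divisor of the image is, through the integral inverse
`C⁻¹`, a common divisor of `(x, y, z)`. Positivity of the image reduces to `x < z`.
-/

theorem lt_of_sq_add_sq_eq_sq {α : Type*} [CommRing α] [LinearOrder α] [IsStrictOrderedRing α]
    {x y z : α} (hy : 0 < y) (hz : 0 < z) (h : x ^ 2 + y ^ 2 = z ^ 2) : x < z := by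
  nlinarith

theorem Int.gcd_gcd_eq_one_of_forall_dvd {a b c x y z : ℤ} (hprim : Int.gcd (Int.gcd x y) z = 1)
    (h : ∀ d : ℤ, d ∣ a → d ∣ b → d ∣ c → d ∣ x ∧ d ∣ y ∧ d ∣ z) :
    Int.gcd (Int.gcd a b) c = 1 := by
  have hab : (Int.gcd (Int.gcd a b) c : ℤ) ∣ Int.gcd a b := Int.gcd_dvd_left ..
  obtain ⟨hx, hy, hz⟩ := h _ (hab.trans (Int.gcd_dvd_left ..)) (hab.trans (Int.gcd_dvd_right ..))
    (Int.gcd_dvd_right ..)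
  have hdvd := Int.dvd_gcd (Int.dvd_coe_gcd hx hy) hz
  rwa [hprim, Nat.dvd_one] at hdvd

-- `C⁻¹` has rows `(-1, -2, 2)`, `(2, 1, -2)`, `(-2, -2, 3)`.
theorem dvd_of_dvd_barning_image {R : Type*} [CommRing R] {d x y z : R}
    (ha : d ∣ -x + 2 * y + 2 * z) (hb : d ∣ -(2 * x) + y + 2 * z)
    (hc : d ∣ -(2 * x) + 2 * y + 3 * z) : d ∣ x ∧ d ∣ y ∧ d ∣ z := by
  obtain ⟨a, ha⟩ := ha
  obtain ⟨b, hb⟩ := hb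
  obtain ⟨c, hc⟩ := hc
  exact ⟨⟨-a - 2 * b + 2 * c, by linear_combination -ha - 2 * hb + 2 * hc⟩,
    ⟨2 * a + b - 2 * c, by linear_combination 2 * ha + hb - 2 * hc⟩,
    ⟨-(2 * a) - 2 * b + 3 * c, by linear_combination -(2 * ha) - 2 * hb + 3 * hc⟩⟩

theorem stmt_3_general (x y z : ℤ) (hy : 0 < y) (hz : 0 < z)
    (hpyth : x ^ 2 + y ^ 2 = z ^ 2) (hprim : Int.gcd (Int.gcd x y) z = 1) :
    0 < -x + 2 * y + 2 * z ∧ 0 < -(2 * x) + y + 2 * z ∧ 0 < -(2 * x) + 2 * y + 3 * z ∧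
      (-x + 2 * y + 2 * z) ^ 2 + (-(2 * x) + y + 2 * z) ^ 2 = (-(2 * x) + 2 * y + 3 * z) ^ 2 ∧
      Int.gcd (Int.gcd (-x + 2 * y + 2 * z) (-(2 * x) + y + 2 * z)) (-(2 * x) + 2 * y + 3 * z) = 1 := by
  have hxz : x < z := lt_of_sq_add_sq_eq_sq hy hz hpyth
  exact ⟨by linarith, by linarith, by linarith, by linear_combination hpyth,
    Int.gcd_gcd_eq_one_of_forall_dvd hprim fun _ => dvd_of_dvd_barning_image⟩

theorem stmt_3 (x y z : ℤ) (hx : 0 < x) (hy : 0 < y) (hz : 0 < z)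
    (hpyth : x ^ 2 + y ^ 2 = z ^ 2) (hprim : Int.gcd (Int.gcd x y) z = 1) :
    0 < -x + 2 * y + 2 * z ∧ 0 < -(2 * x) + y + 2 * z ∧ 0 < -(2 * x) + 2 * y + 3 * z ∧
      (-x + 2 * y + 2 * z) ^ 2 + (-(2 * x) + y + 2 * z) ^ 2 = (-(2 * x) + 2 * y + 3 * z) ^ 2 ∧
      Int.gcd (Int.gcd (-x + 2 * y + 2 * z) (-(2 * x) + y + 2 * z)) (-(2 * x) + 2 * y + 3 * z) = 1 :=
  stmt_3_general x y z hy hz hpyth hprim
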